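/- arXiv:2605.10673 — 2 statements merged into one kernel-verified Lean document; each statement's English description precedes it below -/
import Mathlib

section
/- Let (Ω, P) be a probability space, let q : Ω → ℝ^d be Bochner square-integrable with ∫ q dP = p and ∫ ‖q − p‖² dP = σ², and let K ≥ 1. Then, averaging jointly over ω ∼ P and over (r_1, …, r_K) uniform on ({−1, +1}^d)^K (product measure, independent of ω), E ‖(1/K) Σ_{k=1}^K ⟨q(ω), r_k⟩ · r_k − p‖² = ((d − 1)/K) · ‖p‖² + (1 + (d − 1)/K) · σ². -/
open MeasureTheory

/-- The sign vector in `{-1,+1}^d ⊆ ℝ^d` encoded by a Boolean vector. -/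
noncomputable def signVec (d : ℕ) (s : Fin d → Bool) : EuclideanSpace ℝ (Fin d) :=
  WithLp.toLp 2 (fun i => if s i then 1 else -1)

lemma sum_eval {ι S : Type*} [Fintype ι] [Fintype S] [DecidableEq ι]
    (k : ι) (f : S → ℝ) :
    ∑ t : ι → S, f (t k) =
      (Fintype.card S : ℝ) ^ (Fintype.card ι - 1) * ∑ a, f a := by
  rw [Fintype.sum_equiv (Equiv.funSplitAt k S) _ (fun x => f x.1) (fun t => by simp)]
  rw [Fintype.sum_prod_type]
  simp only [Finset.sum_const, nsmul_eq_mul, ← Finset.mul_sum, Finset.card_univ,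
    Fintype.card_fun, Fintype.card_subtype_compl, Fintype.card_unique]
  push_cast
  ring


lemma sum_eval_pair {ι S : Type*} [Fintype ι] [Fintype S] [DecidableEq ι]
    {k l : ι} (h : k ≠ l) (F : S → S → ℝ) :
    ∑ t : ι → S, F (t k) (t l) =
      (Fintype.card S : ℝ) ^ (Fintype.card ι - 2) * ∑ a, ∑ b, F a b := by
  rw [Fintype.sum_equiv (Equiv.funSplitAt k S) _
    (fun x => F x.1 (x.2 ⟨l, h.symm⟩)) (fun t => by simp)]
  rw [Fintype.sum_prod_type]
  have : ∀ a : S, ∑ g : {j // j ≠ k} → S, F a (g ⟨l, h.symm⟩) =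
      (Fintype.card S : ℝ) ^ (Fintype.card {j // j ≠ k} - 1) * ∑ b, F a b := fun a =>
    sum_eval (⟨l, h.symm⟩ : {j // j ≠ k}) (fun b => F a b)
  simp only [this, Fintype.card_subtype_compl, Fintype.card_unique, ← Finset.mul_sum,
    Nat.sub_sub]





lemma orth (d : ℕ) (i j : Fin d) :
    ∑ s : Fin d → Bool, signVec d s i * signVec d s j =
      if i = j then (2 : ℝ) ^ d else 0 := by
  by_cases h : i = j
  · subst h
    simp only [if_pos rfl]
    have : ∀ s : Fin d → Bool, signVec d s i * signVec d s i = 1 := by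
      intro s; unfold signVec; by_cases h : s i <;> simp [h]
    simp [this, Finset.card_univ, Fintype.card_fun]
  · rw [if_neg h]
    have := sum_eval_pair (S := Bool) h
      (fun a b => ((if a then 1 else -1) : ℝ) * ((if b then 1 else -1) : ℝ))
    simp only [signVec, PiLp.toLp_apply]
    rw [this]
    simp

lemma inner_sign (d : ℕ) (x : EuclideanSpace ℝ (Fin d)) (s : Fin d → Bool) :
    (inner ℝ x (signVec d s) : ℝ) = ∑ j, x j * signVec d s j := by
  simp [PiLp.inner_apply, RCLike.inner_apply, mul_comm]


lemma sum_smul_sign (d : ℕ) (x : EuclideanSpace ℝ (Fin d)) :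
    ∑ s : Fin d → Bool, (inner ℝ x (signVec d s) : ℝ) • signVec d s =
      ((2 : ℝ) ^ d) • x := by
  ext i
  have hs : (∑ s : Fin d → Bool, (inner ℝ x (signVec d s) : ℝ) • signVec d s) i =
      ∑ s : Fin d → Bool, (inner ℝ x (signVec d s) : ℝ) * signVec d s i :=
    by rw [WithLp.ofLp_sum]; simp [Finset.sum_apply]
  rw [hs]
  simp only [inner_sign]
  simp only [show ∀ s, (∑ j, x j * signVec d s j) * signVec d s i
      = ∑ j, x j * (signVec d s j * signVec d s i) from fun s => by
    rw [Finset.sum_mul]; exact Finset.sum_congr rfl fun j _ => by ring]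
  rw [Finset.sum_comm]
  simp only [← Finset.mul_sum, orth]
  simp [PiLp.smul_apply, mul_comm]


lemma inner_sq_sum (d : ℕ) (x : EuclideanSpace ℝ (Fin d)) :
    ∑ s : Fin d → Bool, (inner ℝ x (signVec d s) : ℝ) ^ 2 = (2 : ℝ) ^ d * ‖x‖ ^ 2 := by
  have hx : ‖x‖ ^ 2 = ∑ i, x i * x i := by
    rw [EuclideanSpace.norm_sq_eq]
    exact Finset.sum_congr rfl fun i _ => by rw [Real.norm_eq_abs, sq_abs, sq]
  simp only [inner_sign, sq, Finset.sum_mul_sum]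
  simp only [show ∀ s : Fin d → Bool, ∑ i, ∑ j, (x i * signVec d s i) * (x j * signVec d s j)
      = ∑ i, ∑ j, (x i * x j) * (signVec d s i * signVec d s j) from fun s =>
    Finset.sum_congr rfl fun i _ => Finset.sum_congr rfl fun j _ => by ring]
  rw [Finset.sum_comm]
  have : ∀ i : Fin d, ∑ s : Fin d → Bool, ∑ j, (x i * x j) * (signVec d s i * signVec d s j)
      = ∑ j, (x i * x j) * ∑ s : Fin d → Bool, signVec d s i * signVec d s j := fun i => by
    rw [Finset.sum_comm]
    exact Finset.sum_congr rfl fun j _ => by rw [← Finset.mul_sum]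
  simp only [this, orth]
  simp only [mul_ite, mul_zero, Finset.sum_ite_eq, Finset.mem_univ, if_true]
  rw [← Finset.sum_mul, mul_comm]
  rw [show ‖x‖ * ‖x‖ = ‖x‖ ^ 2 from (sq ‖x‖).symm, hx]


lemma norm_sign_sq (d : ℕ) (s : Fin d → Bool) : ‖signVec d s‖ ^ 2 = (d : ℝ) := by
  rw [← real_inner_self_eq_norm_sq]
  have : ∀ i, signVec d s i * signVec d s i = 1 := by
    intro i; unfold signVec; by_cases h : s i <;> simp [h]
  rw [PiLp.inner_apply]
  simp only [RCLike.inner_apply, conj_trivial, this]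
  simp


lemma final_alg (d K : ℕ) (hK : 1 ≤ K) (X ip pp : ℝ) :
    (K:ℝ)⁻¹ * (K:ℝ)⁻¹ * ((K:ℝ) * (((2:ℝ)^d)^(K-1) * ((d:ℝ) * (2:ℝ)^d * X)
        + ((K:ℝ)-1) * (((2:ℝ)^d)^(K-2) * ((2:ℝ)^d * (2:ℝ)^d * X))))
      - 2 * ((K:ℝ)⁻¹ * ((K:ℝ) * (((2:ℝ)^d)^(K-1) * ((2:ℝ)^d * ip)))) + ((2:ℝ)^d)^K * pp
    = 2^(d*K) * ((1 + ((d:ℝ)-1)/(K:ℝ)) * X - 2*ip + pp) := by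
  rw [pow_mul]
  match K with
  | 0 => omega
  | 1 => norm_num; ring
  | (n+2) =>
    have h1 : n + 2 - 1 = n + 1 := rfl
    have h2 : n + 2 - 2 = n := rfl
    rw [h1, h2]
    have hKR : ((n:ℝ) + 2) ≠ 0 := by positivity
    have hc : ((n + 2 : ℕ) : ℝ) = (n : ℝ) + 2 := by push_cast; ring
    rw [hc]
    field_simp
    ring


lemma key (d K : ℕ) (hK : 1 ≤ K) (x p : EuclideanSpace ℝ (Fin d)) :
    ∑ t : Fin K → Fin d → Bool,
      ‖(K : ℝ)⁻¹ • (∑ k : Fin K, (inner ℝ x (signVec d (t k)) : ℝ) • signVec d (t k)) - p‖ ^ 2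
    = (2 : ℝ) ^ (d * K) *
        ((1 + ((d : ℝ) - 1) / K) * ‖x‖ ^ 2 - 2 * (inner ℝ x p : ℝ) + ‖p‖ ^ 2) := by
  set X : (Fin d → Bool) → EuclideanSpace ℝ (Fin d) :=
    fun s => (inner ℝ x (signVec d s) : ℝ) • signVec d s with hX
  set A : (Fin d → Bool) → (Fin d → Bool) → ℝ := fun a b => (inner ℝ (X a) (X b) : ℝ) with hA
  set B : (Fin d → Bool) → ℝ := fun a => (inner ℝ (X a) p : ℝ) with hB
  have hKR : (K : ℝ) ≠ 0 := by positivity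
  -- pointwise expansion
  have hsummand : ∀ t : Fin K → Fin d → Bool,
      ‖(K : ℝ)⁻¹ • (∑ k : Fin K, X (t k)) - p‖ ^ 2
        = (K : ℝ)⁻¹ * (K : ℝ)⁻¹ * ∑ k : Fin K, ∑ l : Fin K, A (t k) (t l)
          - 2 * ((K : ℝ)⁻¹ * ∑ k : Fin K, B (t k)) + ‖p‖ ^ 2 := by
    intro t
    rw [norm_sub_sq_real]
    congr 1
    congr 1
    · rw [← real_inner_self_eq_norm_sq, real_inner_smul_left, real_inner_smul_right,
        sum_inner]
      simp only [inner_sum]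
      ring
    · rw [real_inner_smul_left, sum_inner]
  rw [Finset.sum_congr rfl fun t _ => hsummand t]
  rw [Finset.sum_add_distrib, Finset.sum_sub_distrib, ← Finset.mul_sum, Finset.sum_const]
  -- the A-part
  have hAsum : ∑ t : Fin K → Fin d → Bool, ∑ k : Fin K, ∑ l : Fin K, A (t k) (t l)
      = ∑ k : Fin K, ∑ l : Fin K, ∑ t : Fin K → Fin d → Bool, A (t k) (t l) := by
    rw [Finset.sum_comm]
    exact Finset.sum_congr rfl fun k _ => Finset.sum_comm
  have hDD : ∑ a, A a a = (d : ℝ) * (2 : ℝ) ^ d * ‖x‖ ^ 2 := by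
    have : ∀ a, A a a = (inner ℝ x (signVec d a) : ℝ) ^ 2 * (d : ℝ) := by
      intro a
      rw [hA]
      dsimp only
      rw [real_inner_self_eq_norm_sq, hX]
      dsimp only
      rw [norm_smul, mul_pow, Real.norm_eq_abs, sq_abs, norm_sign_sq]
    simp only [this, ← Finset.sum_mul, inner_sq_sum]
    ring
  have hCC : ∑ a, ∑ b, A a b = ((2 : ℝ) ^ d) * ((2 : ℝ) ^ d) * ‖x‖ ^ 2 := by
    have : ∑ a, ∑ b, A a b = (inner ℝ (∑ a, X a) (∑ b, X b) : ℝ) := by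
      rw [sum_inner]
      exact Finset.sum_congr rfl fun a _ => (inner_sum _ _ _).symm
    rw [this, sum_smul_sign, real_inner_smul_left, real_inner_smul_right,
      real_inner_self_eq_norm_sq]
    ring
  have hBB : ∑ a, B a = (2 : ℝ) ^ d * (inner ℝ x p : ℝ) := by
    rw [hB, ← sum_inner, sum_smul_sign, real_inner_smul_left]
  have hcardS : ((Fintype.card (Fin d → Bool)) : ℝ) = (2 : ℝ) ^ d := by
    simp [Fintype.card_fun]
  have hAt : ∀ k l : Fin K, ∑ t : Fin K → Fin d → Bool, A (t k) (t l)
      = if k = l then ((2:ℝ)^d) ^ (K - 1) * ((d : ℝ) * (2 : ℝ) ^ d * ‖x‖ ^ 2)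
        else ((2:ℝ)^d) ^ (K - 2) * (((2 : ℝ) ^ d) * ((2 : ℝ) ^ d) * ‖x‖ ^ 2) := by
    intro k l
    by_cases h : k = l
    · subst h
      rw [if_pos rfl, ← hDD]
      have := sum_eval (S := Fin d → Bool) k (fun a => A a a)
      rwa [hcardS, Fintype.card_fin] at this
    · rw [if_neg h, ← hCC]
      have := sum_eval_pair (S := Fin d → Bool) h A
      rwa [hcardS, Fintype.card_fin] at this
  have hBt : ∑ t : Fin K → Fin d → Bool, ∑ k : Fin K, B (t k)
      = (K : ℝ) * (((2:ℝ)^d) ^ (K - 1) * ((2 : ℝ) ^ d * (inner ℝ x p : ℝ))) := by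
    rw [Finset.sum_comm]
    have : ∀ k : Fin K, ∑ t : Fin K → Fin d → Bool, B (t k)
        = ((2:ℝ)^d) ^ (K - 1) * ((2 : ℝ) ^ d * (inner ℝ x p : ℝ)) := by
      intro k
      have := sum_eval (S := Fin d → Bool) k B
      rwa [hcardS, Fintype.card_fin, hBB] at this
    simp [this, Finset.sum_const, mul_comm]
  rw [hAsum]
  simp only [hAt]
  have hdiag : ∀ (D C : ℝ) (k : Fin K), ∑ l : Fin K, (if k = l then D else C)
      = D + ((K : ℝ) - 1) * C := by
    intro D C k
    have : ∀ l : Fin K, (if k = l then D else C) = C + (if k = l then D - C else 0) := by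
      intro l; by_cases h : k = l <;> simp [h]
    simp only [this]
    rw [Finset.sum_add_distrib, Finset.sum_const, Finset.sum_ite_eq]
    simp [Finset.card_univ]
    ring
  simp only [hdiag, Finset.sum_const, Finset.card_univ, Fintype.card_fin, nsmul_eq_mul]
  have hpull : ∑ t : Fin K → Fin d → Bool, 2 * ((K : ℝ)⁻¹ * ∑ k : Fin K, B (t k))
      = 2 * ((K : ℝ)⁻¹ * ∑ t : Fin K → Fin d → Bool, ∑ k : Fin K, B (t k)) := by
    simp only [Finset.mul_sum]
  rw [hpull, hBt]
  have hcardT : ((Fintype.card (Fin K → Fin d → Bool)) : ℝ) = ((2:ℝ) ^ d) ^ K := by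
    simp [Fintype.card_fun]
  rw [hcardT]
  exact final_alg d K hK (‖x‖ ^ 2) (inner ℝ x p) (‖p‖ ^ 2)


/-- **Shared-sample Rademacher variance decomposition** (exact identity).
If `q : Ω → ℝ^d` is square-integrable with mean `p` and variance `σ²`, then the
joint average over `ω ∼ P` and over all `2^{dK}` tuples of sign vectors
`(r_1, …, r_K)` (uniform, independent of `ω`) of
`‖(1/K) Σ_k ⟨q(ω), r_k⟩ • r_k - p‖²` equals
`((d-1)/K) ‖p‖² + (1 + (d-1)/K) σ²`. -/
theorem stmt_9 (d K : ℕ) (hK : 1 ≤ K) {Ω : Type*} [MeasurableSpace Ω]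
    (P : Measure Ω) [IsProbabilityMeasure P]
    (q : Ω → EuclideanSpace ℝ (Fin d)) (hq : MemLp q 2 P)
    (p : EuclideanSpace ℝ (Fin d)) (hp : (∫ ω, q ω ∂P) = p)
    (σ2 : ℝ) (hσ : (∫ ω, ‖q ω - p‖ ^ 2 ∂P) = σ2) :
    ((2 : ℝ) ^ (d * K))⁻¹ *
        ∑ t : Fin K → Fin d → Bool,
          ∫ ω, ‖(K : ℝ)⁻¹ •
              (∑ k : Fin K, (inner ℝ (q ω) (signVec d (t k)) : ℝ) • signVec d (t k)) -
            p‖ ^ 2 ∂P =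
      ((d : ℝ) - 1) / (K : ℝ) * ‖p‖ ^ 2 + (1 + ((d : ℝ) - 1) / (K : ℝ)) * σ2 := by
  classical
  have hq1 : Integrable q P := hq.integrable one_le_two
  -- integrability of each summand
  have hint : ∀ t : Fin K → Fin d → Bool, Integrable (fun ω =>
      ‖(K : ℝ)⁻¹ • (∑ k : Fin K, (inner ℝ (q ω) (signVec d (t k)) : ℝ) • signVec d (t k)) -
        p‖ ^ 2) P := by
    intro t
    have hmem : MemLp (fun ω => (K : ℝ)⁻¹ •
        (∑ k : Fin K, (inner ℝ (q ω) (signVec d (t k)) : ℝ) • signVec d (t k)) - p) 2 P := by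
      apply MemLp.sub _ (memLp_const p)
      apply MemLp.const_smul (c := (K : ℝ)⁻¹) (f := fun ω => ∑ k : Fin K, (inner ℝ (q ω) (signVec d (t k)) : ℝ) • signVec d (t k))
      apply memLp_finset_sum
      intro k _
      have h := ((innerSL ℝ (signVec d (t k))).smulRight (signVec d (t k))).comp_memLp' hq
      have heq : (((innerSL ℝ (signVec d (t k))).smulRight (signVec d (t k))) ∘ q)
          = fun ω => (inner ℝ (q ω) (signVec d (t k)) : ℝ) • signVec d (t k) := by
        funext ω
        simp only [Function.comp_apply, ContinuousLinearMap.smulRight_apply, innerSL_apply_apply,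
          PiLp.inner_apply, RCLike.inner_apply, conj_trivial]
        congr 1
        exact Finset.sum_congr rfl fun i _ => mul_comm _ _
      rwa [heq] at h
    exact hmem.norm.integrable_sq
  rw [← integral_finset_sum Finset.univ (fun t _ => hint t)]
  simp only [key d K hK]
  rw [integral_const_mul]
  -- component integrals
  have hip : Integrable (fun ω => (inner ℝ (q ω) p : ℝ)) P := by
    have h := (innerSL ℝ p).integrable_comp hq1
    have heq : (fun a => ((innerSL ℝ) p) (q a)) = fun ω => (inner ℝ (q ω) p : ℝ) :=
      funext fun ω => by
        simp only [innerSL_apply_apply]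
        exact real_inner_comm _ _
    rwa [heq] at h
  have hiq2 : Integrable (fun ω => ‖q ω‖ ^ 2) P := hq.norm.integrable_sq
  have hIip : ∫ ω, (inner ℝ (q ω) p : ℝ) ∂P = ‖p‖ ^ 2 := by
    rw [show (fun ω => (inner ℝ (q ω) p : ℝ)) = fun ω => (inner ℝ p (q ω) : ℝ) from
      funext fun ω => real_inner_comm _ _]
    rw [integral_inner hq1 p, hp, real_inner_self_eq_norm_sq]
  have hIq2 : ∫ ω, ‖q ω‖ ^ 2 ∂P = σ2 + ‖p‖ ^ 2 := by
    have hpt : (fun ω => ‖q ω - p‖ ^ 2)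
        = fun ω => ‖q ω‖ ^ 2 - 2 * (inner ℝ (q ω) p : ℝ) + ‖p‖ ^ 2 :=
      funext fun ω => norm_sub_sq_real _ _
    rw [hpt] at hσ
    have i1 : Integrable (fun ω => ‖q ω‖ ^ 2 - 2 * (inner ℝ (q ω) p : ℝ)) P :=
      hiq2.sub (hip.const_mul 2)
    rw [integral_add i1 (integrable_const _),
      integral_sub hiq2 (hip.const_mul 2), integral_const_mul, hIip,
      integral_const] at hσ
    simp only [measure_univ, probReal_univ, ENNReal.toReal_one, smul_eq_mul, one_mul] at hσ
    linarith
  have hsplit : ∫ ω, ((1 + ((d : ℝ) - 1) / K) * ‖q ω‖ ^ 2 - 2 * (inner ℝ (q ω) p : ℝ)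
      + ‖p‖ ^ 2) ∂P
      = (1 + ((d : ℝ) - 1) / K) * (σ2 + ‖p‖ ^ 2) - 2 * ‖p‖ ^ 2 + ‖p‖ ^ 2 := by
    have i2 : Integrable (fun ω => (1 + ((d : ℝ) - 1) / K) * ‖q ω‖ ^ 2
        - 2 * (inner ℝ (q ω) p : ℝ)) P := (hiq2.const_mul _).sub (hip.const_mul 2)
    rw [integral_add i2 (integrable_const _),
      integral_sub (hiq2.const_mul _) (hip.const_mul 2), integral_const_mul,
      integral_const_mul, hIip, hIq2, integral_const]
    simp [measure_univ]
  rw [hsplit]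
  have h2 : ((2 : ℝ) ^ (d * K)) ≠ 0 := by positivity
  field_simp
  ring
end

section
/- There exists a universal constant C > 0, independent of all parameters below, with the following property. For every dimension d ≥ 1, every L ≥ 0, μ > 0, Δ ≥ 0, B ≥ 0, every x ∈ ℝ^d and u ∈ {−1, +1}^d, every F : ℝ^d → ℝ differentiable with L-Lipschitz gradient on an open convex set X, and every pair of points y₊, y₋ ∈ ℝ^d with ‖y₊ − (x + μu)‖ ≤ B√d·Δ/2 and ‖y₋ − (x − μu)‖ ≤ B√d·Δ/2, such that X contains x, x ± μu, y₊, y₋ and the segments joining x ± μu to y±: ‖((F(y₊) − F(y₋))/(2μ))·u − ((F(x + μu) − F(x − μu))/(2μ))·u‖² ≤ C · (B² d² Δ² / μ²) · (‖∇F(x)‖² + L² d (μ² + B² Δ²)). -/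
open InnerProductSpace in
lemma norm_grad_sub' {n : ℕ} (F : EuclideanSpace ℝ (Fin n) → ℝ) (a b : EuclideanSpace ℝ (Fin n)) :
    ‖gradient F a - gradient F b‖ = ‖fderiv ℝ F a - fderiv ℝ F b‖ := by
  rw [gradient, gradient, ← LinearIsometryEquiv.map_sub]
  exact LinearIsometryEquiv.norm_map _ _

open InnerProductSpace in
lemma norm_grad_eq' {n : ℕ} (F : EuclideanSpace ℝ (Fin n) → ℝ) (a : EuclideanSpace ℝ (Fin n)) :
    ‖gradient F a‖ = ‖fderiv ℝ F a‖ := by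
  rw [gradient]; exact LinearIsometryEquiv.norm_map _ _

lemma key_mvt {n : ℕ} (F : EuclideanSpace ℝ (Fin n) → ℝ) (X : Set (EuclideanSpace ℝ (Fin n)))
    (hXo : IsOpen X) (hdiff : DifferentiableOn ℝ F X) (L : ℝ) (hL : 0 ≤ L)
    (hlip : ∀ a ∈ X, ∀ b ∈ X, ‖gradient F a - gradient F b‖ ≤ L * ‖a - b‖)
    (a b : EuclideanSpace ℝ (Fin n)) (hseg : segment ℝ a b ⊆ X) :
    |F b - F a| ≤ (‖gradient F a‖ + L * ‖b - a‖) * ‖b - a‖ := by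
  have hsub : ∀ z ∈ segment ℝ a b, ‖z - a‖ ≤ ‖b - a‖ := by
    intro z hz
    rw [segment_eq_image'] at hz
    obtain ⟨t, ⟨ht0, ht1⟩, rfl⟩ := hz
    simp only [add_sub_cancel_left, norm_smul, Real.norm_eq_abs, abs_of_nonneg ht0]
    nlinarith [norm_nonneg (b - a)]
  have := (convex_segment a b).norm_image_sub_le_of_norm_fderiv_le
    (f := F) (C := ‖gradient F a‖ + L * ‖b - a‖)
    (fun z hz => hdiff.differentiableAt (hXo.mem_nhds (hseg hz)))
    (fun z hz => by
      have h1 : ‖fderiv ℝ F z‖ - ‖fderiv ℝ F a‖ ≤ ‖fderiv ℝ F z - fderiv ℝ F a‖ :=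
        norm_sub_norm_le _ _
      have h2 : ‖fderiv ℝ F z - fderiv ℝ F a‖ ≤ L * ‖z - a‖ := by
        rw [← norm_grad_sub']
        exact hlip z (hseg hz) a (hseg (left_mem_segment ℝ a b))
      have h3 : L * ‖z - a‖ ≤ L * ‖b - a‖ :=
        mul_le_mul_of_nonneg_left (hsub z hz) hL
      rw [norm_grad_eq']
      linarith)
    (left_mem_segment ℝ a b) (right_mem_segment ℝ a b)
  simpa [Real.norm_eq_abs] using this

lemma small_ineq (g L μ s c : ℝ) :
    (g + L * (μ * s) + L * (c * s / 2)) ^ 2 ≤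
      12 * (g ^ 2 + L ^ 2 * s ^ 2 * μ ^ 2 + L ^ 2 * s ^ 2 * c ^ 2) := by
  nlinarith [sq_nonneg (g - L * (μ * s)), sq_nonneg (g - L * (c * s / 2)),
    sq_nonneg (L * (μ * s) - L * (c * s / 2)), sq_nonneg (L * c * s), sq_nonneg g,
    sq_nonneg (L * μ * s), sq_nonneg (L * s * c)]

set_option maxHeartbeats 1000000 in
/-- **Weight-space endpoint-rounding coupling bound** (deterministic core of
Theorem 2, Eq. weight-response-budget). There is a universal constant `C > 0`
such that for any dimension, smoothness/rounding parameters, Rademacher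
direction `u`, `F` with `L`-Lipschitz gradient on an open convex set `X`, and
rounded endpoints `y₊, y₋` within `B√d·Δ/2` of the unrounded stencil endpoints
`x ± μu` (all relevant points and segments contained in `X`), the squared norm
of the difference of the two two-point responses is bounded by
`C (B²d²Δ²/μ²)(‖∇F(x)‖² + L²d(μ² + B²Δ²))`. -/
theorem stmt_12 :
    ∃ C : ℝ, 0 < C ∧
      ∀ (d : ℕ), 1 ≤ d →
      ∀ (L μ Δ B : ℝ), 0 ≤ L → 0 < μ → 0 ≤ Δ → 0 ≤ B →
      ∀ (x u : EuclideanSpace ℝ (Fin d)), (∀ i, u i = 1 ∨ u i = -1) →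
      ∀ (F : EuclideanSpace ℝ (Fin d) → ℝ) (X : Set (EuclideanSpace ℝ (Fin d))),
        IsOpen X → Convex ℝ X → DifferentiableOn ℝ F X →
        (∀ a ∈ X, ∀ b ∈ X, ‖gradient F a - gradient F b‖ ≤ L * ‖a - b‖) →
      ∀ (yp ym : EuclideanSpace ℝ (Fin d)),
        ‖yp - (x + μ • u)‖ ≤ B * Real.sqrt d * Δ / 2 →
        ‖ym - (x - μ • u)‖ ≤ B * Real.sqrt d * Δ / 2 →
        x ∈ X → x + μ • u ∈ X → x - μ • u ∈ X → yp ∈ X → ym ∈ X →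
        segment ℝ (x + μ • u) yp ⊆ X → segment ℝ (x - μ • u) ym ⊆ X →
        ‖((F yp - F ym) / (2 * μ)) • u -
            ((F (x + μ • u) - F (x - μ • u)) / (2 * μ)) • u‖ ^ 2 ≤
          C * (B ^ 2 * (d : ℝ) ^ 2 * Δ ^ 2 / μ ^ 2) *
            (‖gradient F x‖ ^ 2 + L ^ 2 * (d : ℝ) * (μ ^ 2 + B ^ 2 * Δ ^ 2)) := by
  refine ⟨3, by norm_num, ?_⟩
  intro d hd L μ Δ B hL hμ hΔ hB x u hu F X hXo hXc hdiff hlip yp ym hyp hym hx hxp hxm hyiX hymX hsp hsm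
  set s : ℝ := Real.sqrt d with hs_def
  have hs0 : 0 ≤ s := Real.sqrt_nonneg _
  have hs2 : s ^ 2 = (d : ℝ) := Real.sq_sqrt (by positivity)
  clear_value s
  have hd1 : (1 : ℝ) ≤ (d : ℝ) := by exact_mod_cast hd
  -- norm of u
  have hnu : ‖u‖ = s := by
    have hsum : ∑ i : Fin d, ‖u i‖ ^ 2 = (d : ℝ) := by
      have h1 : ∀ i : Fin d, ‖u i‖ ^ 2 = 1 := fun i => by
        rcases hu i with h | h <;> simp [h]
      rw [Finset.sum_congr rfl fun i _ => h1 i]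
      simp
    rw [EuclideanSpace.norm_eq, hsum]
    exact hs_def.symm
  set g : ℝ := ‖gradient F x‖ with hg_def
  have hg0 : 0 ≤ g := norm_nonneg _
  set e : ℝ := B * s * Δ / 2 with he_def
  have he0 : 0 ≤ e := by positivity
  -- distance from x to x ± μu
  have hdp : ‖(x + μ • u) - x‖ = μ * s := by
    simp [norm_smul, abs_of_pos hμ, hnu]
  have hdm : ‖(x - μ • u) - x‖ = μ * s := by
    have : (x - μ • u) - x = -(μ • u) := by abel
    rw [this, norm_neg, norm_smul, Real.norm_eq_abs, abs_of_pos hμ, hnu]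
  -- gradient bounds at endpoints
  have hgp : ‖gradient F (x + μ • u)‖ ≤ g + L * (μ * s) := by
    have h1 := hlip (x + μ • u) hxp x hx
    have h2 : ‖gradient F (x + μ • u)‖ - g ≤ ‖gradient F (x + μ • u) - gradient F x‖ :=
      norm_sub_norm_le _ _
    rw [hdp] at h1; linarith
  have hgm : ‖gradient F (x - μ • u)‖ ≤ g + L * (μ * s) := by
    have h1 := hlip (x - μ • u) hxm x hx
    have h2 : ‖gradient F (x - μ • u)‖ - g ≤ ‖gradient F (x - μ • u) - gradient F x‖ :=
      norm_sub_norm_le _ _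
    rw [hdm] at h1; linarith
  -- function value perturbations
  have hP : |F yp - F (x + μ • u)| ≤ (g + L * (μ * s) + L * e) * e := by
    have h1 := key_mvt F X hXo hdiff L hL hlip (x + μ • u) yp hsp
    refine h1.trans (mul_le_mul ?_ hyp (norm_nonneg _) (by positivity))
    have := mul_le_mul_of_nonneg_left hyp hL
    linarith [hgp]
  have hM : |F ym - F (x - μ • u)| ≤ (g + L * (μ * s) + L * e) * e := by
    have h1 := key_mvt F X hXo hdiff L hL hlip (x - μ • u) ym hsm
    refine h1.trans (mul_le_mul ?_ hym (norm_nonneg _) (by positivity))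
    have := mul_le_mul_of_nonneg_left hym hL
    linarith [hgm]
  set P : ℝ := F yp - F (x + μ • u) with hP_def
  set M : ℝ := F ym - F (x - μ • u) with hM_def
  set K : ℝ := (g + L * (μ * s) + L * e) * e with hK_def
  have hK0 : 0 ≤ K := by positivity
  clear_value g e P M K
  -- rewrite LHS
  have hLHS : ‖((F yp - F ym) / (2 * μ)) • u -
      ((F (x + μ • u) - F (x - μ • u)) / (2 * μ)) • u‖ = |P - M| / (2 * μ) * s := by
    rw [← sub_smul, norm_smul, Real.norm_eq_abs, hnu, div_sub_div_same]
    have hPM : F yp - F ym - (F (x + μ • u) - F (x - μ • u)) = P - M := by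
      rw [hP_def, hM_def]; ring
    rw [hPM, abs_div, abs_of_pos (by linarith : (0:ℝ) < 2 * μ)]
  rw [hLHS]
  have habs : |P - M| ≤ 2 * K := by
    have := abs_sub P M
    linarith
  have h2 : (|P - M| * s) ^ 2 ≤ (2 * K * s) ^ 2 := by
    have h3 : |P - M| * s ≤ 2 * K * s := mul_le_mul_of_nonneg_right habs hs0
    have h4 : 0 ≤ |P - M| * s := mul_nonneg (abs_nonneg _) hs0
    nlinarith
  set c : ℝ := B * Δ with hc_def
  clear_value c
  have he : e = c * s / 2 := by rw [he_def, hc_def]; ring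
  have hsmall : (g + L * (μ * s) + L * e) ^ 2 ≤
      12 * (g ^ 2 + L ^ 2 * s ^ 2 * μ ^ 2 + L ^ 2 * s ^ 2 * c ^ 2) := by
    rw [he]; exact small_ineq g L μ s c
  have hcore : (|P - M| * s) ^ 2 ≤
      12 * (B ^ 2 * (d : ℝ) ^ 2 * Δ ^ 2) * (g ^ 2 + L ^ 2 * (d : ℝ) * (μ ^ 2 + B ^ 2 * Δ ^ 2)) := by
    have h5 : (2 * K * s) ^ 2 = (g + L * (μ * s) + L * e) ^ 2 * (c ^ 2 * s ^ 4) := by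
      rw [hK_def, he]; ring
    have h6 : (g + L * (μ * s) + L * e) ^ 2 * (c ^ 2 * s ^ 4) ≤
        (12 * (g ^ 2 + L ^ 2 * s ^ 2 * μ ^ 2 + L ^ 2 * s ^ 2 * c ^ 2)) * (c ^ 2 * s ^ 4) :=
      mul_le_mul_of_nonneg_right hsmall (by positivity)
    have h7 : (12 * (g ^ 2 + L ^ 2 * s ^ 2 * μ ^ 2 + L ^ 2 * s ^ 2 * c ^ 2)) * (c ^ 2 * s ^ 4) =
        12 * (B ^ 2 * (d : ℝ) ^ 2 * Δ ^ 2) *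
          (g ^ 2 + L ^ 2 * (d : ℝ) * (μ ^ 2 + B ^ 2 * Δ ^ 2)) := by
      rw [← hs2, hc_def]; ring
    linarith [h2]
  have hμ2 : (0:ℝ) < 4 * μ ^ 2 := by positivity
  have hdiv : (|P - M| / (2 * μ) * s) ^ 2 = (|P - M| * s) ^ 2 / (4 * μ ^ 2) := by
    rw [div_mul_eq_mul_div, div_pow]
    congr 1
    ring
  have hrhs : (3:ℝ) * (B ^ 2 * (d : ℝ) ^ 2 * Δ ^ 2 / μ ^ 2) *
      (g ^ 2 + L ^ 2 * (d : ℝ) * (μ ^ 2 + B ^ 2 * Δ ^ 2)) =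
      (12 * (B ^ 2 * (d : ℝ) ^ 2 * Δ ^ 2) * (g ^ 2 + L ^ 2 * (d : ℝ) * (μ ^ 2 + B ^ 2 * Δ ^ 2))) /
        (4 * μ ^ 2) := by
    field_simp; ring
  rw [hdiv, hrhs]
  exact div_le_div_of_nonneg_right hcore hμ2.le
end
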